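/- arXiv:2105.00759 — 2 statements merged into one kernel-verified Lean document; each statement's English description precedes it below -/
import Mathlib

section
/- Every environment evolving according to the NOR rule converges after at most one time step, in the sense that E_{t+2} = E_t for every t ≥ 1. -/
/-!
One step of the NOR rule is an antitone map `N` on configurations that is adjoint to itself:
`x ≤ N y ↔ y ≤ N x`, since both sides say that no `true` cell of `x` is adjacent to a `true` cell
of `y`. So `N` is a Galois connection between the configurations and their order dual, and any
such map satisfies `N ∘ N ∘ N = N`; hence `E (t + 3) = E (t + 1)`.
-/

/-- The NOR rule. -/
def norRule (a b c : Bool) : Bool := !(a || b || c)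

def norStep {G : Type*} [AddGroupWithOne G] (x : G → Bool) (i : G) : Bool :=
  norRule (x (i - 1)) (x i) (x (i + 1))

section
variable {G : Type*} [AddGroupWithOne G]

lemma le_norStep_of_le_norStep {x y : G → Bool} (h : x ≤ norStep y) : y ≤ norStep x := by
  intro i
  have hl := h (i - 1)
  have hc := h i
  have hr := h (i + 1)
  simp only [norStep, norRule, sub_add_cancel, add_sub_cancel_right] at hl hc hr ⊢
  revert hl hc hr
  cases x (i - 1) <;> cases x i <;> cases x (i + 1) <;> cases y i <;> simp

lemma le_norStep_comm {x y : G → Bool} : x ≤ norStep y ↔ y ≤ norStep x :=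
  ⟨le_norStep_of_le_norStep, le_norStep_of_le_norStep⟩

lemma norStep_galoisConnection :
    GaloisConnection (OrderDual.toDual ∘ norStep (G := G)) (norStep ∘ OrderDual.ofDual) :=
  fun _ _ => le_norStep_comm

lemma norStep_norStep_norStep (x : G → Bool) : norStep (norStep (norStep x)) = norStep x :=
  norStep_galoisConnection.l_u_l_eq_l x

end

theorem nor_converges_after_one_step_general (n : ℕ)
    (E : ℕ → ZMod n → Bool)
    (hE : ∀ t (i : ZMod n),
      E (t + 1) i = norRule (E t (i - 1)) (E t i) (E t (i + 1)))
    (t : ℕ) (ht : 1 ≤ t) :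
    E (t + 2) = E t := by
  have hstep : ∀ s, E (s + 1) = norStep (E s) := fun s => funext (hE s)
  obtain ⟨s, rfl⟩ := Nat.exists_eq_add_of_le' ht
  rw [hstep, hstep, hstep, norStep_norStep_norStep, ← hstep]

theorem nor_converges_after_one_step (n : ℕ) (hn : 5 ≤ n)
    (E : ℕ → ZMod n → Bool)
    (hE : ∀ t (i : ZMod n),
      E (t + 1) i = norRule (E t (i - 1)) (E t i) (E t (i + 1)))
    (t : ℕ) (ht : 1 ≤ t) :
    E (t + 2) = E t :=
  nor_converges_after_one_step_general n E hE t ht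
end

section
/- For the majority rule, if a location i is final at time t (its neighborhood pattern is not 101 or 010), then its value never changes: E_{t'}(i) = E_t(i) for all t' ≥ t. -/
/-!
A final location has a neighbour carrying the same value. Two equal adjacent values form a
block that majority never breaks: each cell of the block sees its own value on one side, so it
keeps it. By induction the block, and with it the location, is frozen from then on.
-/

/-- The majority rule on bits. -/
def maj (a b c : Fin 2) : Fin 2 := if 2 ≤ a.val + b.val + c.val then 1 else 0

/-- A location `i` is final at configuration `σ` if its neighborhood pattern
is not 101 nor 010. -/
def MajFinal {n : ℕ} (σ : ZMod n → Fin 2) (i : ZMod n) : Prop :=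
  ¬((σ (i - 1), σ i, σ (i + 1)) = ((1 : Fin 2), (0 : Fin 2), (1 : Fin 2)) ∨
    (σ (i - 1), σ i, σ (i + 1)) = ((0 : Fin 2), (1 : Fin 2), (0 : Fin 2)))

lemma maj_eq_of_left_eq {a b : Fin 2} (c : Fin 2) (h : a = b) : maj a b c = b := by
  subst h; revert a c; decide

lemma maj_eq_of_right_eq (a : Fin 2) {b c : Fin 2} (h : c = b) : maj a b c = b := by
  subst h; revert a c; decide

lemma majFinal_iff {n : ℕ} (σ : ZMod n → Fin 2) (i : ZMod n) :
    MajFinal σ i ↔ σ (i - 1) = σ i ∨ σ (i + 1) = σ i := by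
  unfold MajFinal
  generalize σ (i - 1) = a, σ i = b, σ (i + 1) = c
  revert a b c; decide

section Block

variable {G : Type*} [AddGroupWithOne G] {E : ℕ → G → Fin 2}
  (hE : ∀ t i, E (t + 1) i = maj (E t (i - 1)) (E t i) (E t (i + 1)))
include hE

lemma block_step {t : ℕ} {j : G} (h : E t j = E t (j + 1)) :
    E (t + 1) j = E t j ∧ E (t + 1) (j + 1) = E t (j + 1) := by
  constructor
  · rw [hE]; exact maj_eq_of_right_eq _ h.symm
  · rw [hE, add_sub_cancel_right]; exact maj_eq_of_left_eq _ h

lemma block_stable {t : ℕ} {j : G} (h : E t j = E t (j + 1)) :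
    ∀ t', t ≤ t' → E t' j = E t j ∧ E t' (j + 1) = E t (j + 1) := by
  intro t' ht'
  induction t', ht' using Nat.le_induction with
  | base => exact ⟨rfl, rfl⟩
  | succ m _ ih =>
    obtain ⟨hj, hj'⟩ := ih
    have hblock : E m j = E m (j + 1) := by rw [hj, hj', h]
    obtain ⟨hj₁, hj₁'⟩ := block_step hE hblock
    exact ⟨hj₁.trans hj, hj₁'.trans hj'⟩

end Block

theorem maj_final_value_never_changes_general (n : ℕ)
    (E : ℕ → ZMod n → Fin 2)
    (hE : ∀ t (i : ZMod n),
      E (t + 1) i = maj (E t (i - 1)) (E t i) (E t (i + 1)))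
    (t : ℕ) (i : ZMod n) (h : MajFinal (E t) i) :
    ∀ t', t ≤ t' → E t' i = E t i := by
  intro t' ht'
  rcases (majFinal_iff _ _).mp h with hleft | hright
  · have hblock : E t (i - 1) = E t (i - 1 + 1) := by rwa [sub_add_cancel]
    simpa only [sub_add_cancel] using (block_stable hE hblock t' ht').2
  · exact (block_stable hE hright.symm t' ht').1

theorem maj_final_value_never_changes (n : ℕ) (hn : 5 ≤ n)
    (E : ℕ → ZMod n → Fin 2)
    (hE : ∀ t (i : ZMod n),
      E (t + 1) i = maj (E t (i - 1)) (E t i) (E t (i + 1)))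
    (t : ℕ) (i : ZMod n) (h : MajFinal (E t) i) :
    ∀ t', t ≤ t' → E t' i = E t i :=
  maj_final_value_never_changes_general n E hE t i h
end
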